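/- arXiv:1406.2985 — 5 statements merged into one kernel-verified Lean document; each statement's English description precedes it below -/
import Mathlib

section
/- Let S ⊆ ℤ^{n+1} be a finitely generated submonoid and q = (q_{ij})_{0≤i,j≤n} a multiplicatively skew-symmetric matrix with entries in kˣ. Regard the monoid algebra k[S] as a ℤ^{n+1}-graded k-algebra with homogeneous components k·X^s for s ∈ S and 0 otherwise. Then there exists a left twisting system τ = {τ_u : u ∈ ℤ^{n+1}} on k[S] over ℤ^{n+1} such that the associated twisted product satisfies X^s ∘ X^t = β_q(s,t)·X^{s+t} for all s,t ∈ S; that is, the twisted algebra ᵗ(k[S]) is the twisted semigroup algebra k_q[S]. -/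
/-!
The twisting system is diagonal: `τ_u` rescales each monomial, `X^s ↦ β_q(s,u) X^s`. Because
`β_q` is a bicharacter, `s ↦ β_q(s,u)` is a character of `S`, so `τ_u` is an algebra
automorphism of `k[S]` preserving every graded piece; and `τ_v ∘ τ_u = τ_{u+v}` by additivity
in the second variable. Multiplicativity of `τ_{g''}` and this composition law give the left
twisting relation, and `τ_t(X^s)·X^t = β_q(s,t) X^{s+t}` is immediate.
-/

/-- The 2-cocycle `β_q(s,t) = ∏_{0 ≤ j < i ≤ n} q_{ij}^{s_i t_j}` on `ℤ^{n+1}` determined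
by a matrix `q` with entries in `kˣ`. -/
def betaq {k : Type*} [Field k] {n : ℕ} (q : Fin (n + 1) → Fin (n + 1) → kˣ)
    (s t : Fin (n + 1) → ℤ) : kˣ :=
  ∏ i : Fin (n + 1), ∏ j : Fin (n + 1),
    if (j : ℕ) < (i : ℕ) then q i j ^ (s i * t j) else 1

/-- An element of the monoid algebra `k[S]` is homogeneous of degree `g ∈ ℤ^{n+1}` if its
support lies in degree `g`. -/
def IsHomogOfDeg {k : Type*} [Field k] {n : ℕ} (S : AddSubmonoid (Fin (n + 1) → ℤ))
    (g : Fin (n + 1) → ℤ) (a : AddMonoidAlgebra k ↥S) : Prop :=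
  ∀ s ∈ a.coeff.support, (s : Fin (n + 1) → ℤ) = g

namespace AddMonoidAlgebra

variable {k M : Type*} [CommSemiring k] [AddMonoid M]

noncomputable def scaleByChar (χ : AddChar M kˣ) : k[M] →ₐ[k] k[M] :=
  lift k k[M] M
    { toFun m := single m.toAdd (χ m.toAdd : k)
      map_one' := by simp [one_def]
      map_mul' m m' := by simp [single_mul_single, AddChar.map_add_eq_mul] }

@[simp]
lemma scaleByChar_single (χ : AddChar M kˣ) (m : M) (r : k) :
    scaleByChar χ (single m r) = single m (χ m * r) := by
  simp [scaleByChar, lift_single, mul_comm]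

lemma coeff_scaleByChar (χ : AddChar M kˣ) (a : k[M]) (m : M) :
    (scaleByChar χ a).coeff m = χ m * a.coeff m := by
  classical
  induction a using induction_linear with
  | zero => simp
  | add a b ha hb => simp [coeff_add, ha, hb, mul_add]
  | single m' r => by_cases h : m' = m <;> simp [coeff_single, h]

lemma support_scaleByChar (χ : AddChar M kˣ) (a : k[M]) :
    (scaleByChar χ a).coeff.support = a.coeff.support := by
  ext m
  simp [coeff_scaleByChar]

lemma scaleByChar_scaleByChar (χ ψ : AddChar M kˣ) (a : k[M]) :
    scaleByChar χ (scaleByChar ψ a) = scaleByChar (χ * ψ) a := by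
  ext m
  simp [coeff_scaleByChar, mul_assoc]

noncomputable def scaleByCharEquiv (χ : AddChar M kˣ) : k[M] ≃ₐ[k] k[M] :=
  AlgEquiv.ofAlgHom (scaleByChar χ) (scaleByChar (invMonoidHom.compAddChar χ))
    (by ext; simp) (by ext; simp)

@[simp]
lemma scaleByCharEquiv_apply (χ : AddChar M kˣ) (a : k[M]) :
    scaleByCharEquiv χ a = scaleByChar χ a :=
  rfl

end AddMonoidAlgebra

open AddMonoidAlgebra

section Betaq

variable {k : Type*} [Field k] {n : ℕ} (q : Fin (n + 1) → Fin (n + 1) → kˣ)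

lemma betaq_zero_left (u : Fin (n + 1) → ℤ) : betaq q 0 u = 1 := by
  simp [betaq]

lemma betaq_add_left (s t u : Fin (n + 1) → ℤ) :
    betaq q (s + t) u = betaq q s u * betaq q t u := by
  simp only [betaq, ← Finset.prod_mul_distrib]
  refine Finset.prod_congr rfl fun i _ => Finset.prod_congr rfl fun j _ => ?_
  split_ifs
  · rw [Pi.add_apply, add_mul, zpow_add]
  · rw [one_mul]

lemma betaq_add_right (s t u : Fin (n + 1) → ℤ) :
    betaq q s (t + u) = betaq q s t * betaq q s u := by
  simp only [betaq, ← Finset.prod_mul_distrib]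
  refine Finset.prod_congr rfl fun i _ => Finset.prod_congr rfl fun j _ => ?_
  split_ifs
  · rw [Pi.add_apply, mul_add, zpow_add]
  · rw [one_mul]

def betaqChar (u : Fin (n + 1) → ℤ) : AddChar (Fin (n + 1) → ℤ) kˣ where
  toFun s := betaq q s u
  map_zero_eq_one' := betaq_zero_left q u
  map_add_eq_mul' s t := betaq_add_left q s t u

variable (S : AddSubmonoid (Fin (n + 1) → ℤ))

noncomputable def betaqTwist (u : Fin (n + 1) → ℤ) : k[S] ≃ₐ[k] k[S] :=
  scaleByCharEquiv ((betaqChar q u).compAddMonoidHom S.subtype)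

lemma isHomogOfDeg_betaqTwist {u g : Fin (n + 1) → ℤ} {a : k[S]} (ha : IsHomogOfDeg S g a) :
    IsHomogOfDeg S g (betaqTwist q S u a) := by
  intro s hs
  rw [betaqTwist, scaleByCharEquiv_apply, support_scaleByChar] at hs
  exact ha s hs

lemma betaqTwist_betaqTwist (u v : Fin (n + 1) → ℤ) (a : k[S]) :
    betaqTwist q S v (betaqTwist q S u a) = betaqTwist q S (u + v) a := by
  simp only [betaqTwist, scaleByCharEquiv_apply, scaleByChar_scaleByChar]
  congr 1
  ext s
  simp [betaqChar, betaq_add_right, mul_comm]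

lemma betaqTwist_betaqTwist_mul (u v : Fin (n + 1) → ℤ) (a a' : k[S]) :
    betaqTwist q S v (betaqTwist q S u a * a') =
      betaqTwist q S (u + v) a * betaqTwist q S v a' := by
  rw [map_mul, betaqTwist_betaqTwist]

lemma betaqTwist_single_mul_single (s t : S) :
    betaqTwist q S t (single s (1 : k)) * single t 1 =
      (betaq q s t : k) • single (s + t) (1 : k) := by
  simp [betaqTwist, betaqChar, single_mul_single]

end Betaq

theorem monoidAlgebra_twist_to_kqS_general
    {k : Type*} [Field k] {n : ℕ} (S : AddSubmonoid (Fin (n + 1) → ℤ))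
    (q : Fin (n + 1) → Fin (n + 1) → kˣ) :
    ∃ τ : (Fin (n + 1) → ℤ) → (AddMonoidAlgebra k ↥S ≃ₗ[k] AddMonoidAlgebra k ↥S),
      (∀ (u g : Fin (n + 1) → ℤ) (a : AddMonoidAlgebra k ↥S),
        IsHomogOfDeg S g a → IsHomogOfDeg S g (τ u a)) ∧
      (∀ (g' g'' : Fin (n + 1) → ℤ) (a a' : AddMonoidAlgebra k ↥S),
        IsHomogOfDeg S g' a' → τ g'' (τ g' a * a') = τ (g' + g'') a * τ g'' a') ∧
      (∀ s t : S,
        τ (t : Fin (n + 1) → ℤ) (AddMonoidAlgebra.single s (1 : k)) *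
            AddMonoidAlgebra.single t (1 : k) =
          ((betaq q (s : Fin (n + 1) → ℤ) (t : Fin (n + 1) → ℤ) : kˣ) : k) •
            AddMonoidAlgebra.single (s + t) (1 : k)) :=
  ⟨fun u => (betaqTwist q S u).toLinearEquiv,
    fun _ _ _ => isHomogOfDeg_betaqTwist q S,
    fun g' g'' a a' _ => betaqTwist_betaqTwist_mul q S g' g'' a a',
    betaqTwist_single_mul_single q S⟩

/-- Let `S ⊆ ℤ^{n+1}` be a finitely generated submonoid and `q` a multiplicatively
skew-symmetric matrix with entries in `kˣ`. Then there is a left twisting system `τ` on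
the `ℤ^{n+1}`-graded algebra `k[S]` (a family of degree-preserving `k`-linear automorphisms
satisfying the left twisting relation) whose twisted product satisfies
`X^s ∘ X^t = β_q(s,t)·X^{s+t}` for all `s, t ∈ S`; that is, the twist of `k[S]` by `τ` is
the twisted semigroup algebra `k_q[S]`. -/
theorem monoidAlgebra_twist_to_kqS
    {k : Type*} [Field k] {n : ℕ} (S : AddSubmonoid (Fin (n + 1) → ℤ)) (hfg : S.FG)
    (q : Fin (n + 1) → Fin (n + 1) → kˣ)
    (hq1 : ∀ i, q i i = 1) (hq2 : ∀ i j, q i j * q j i = 1) :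
    ∃ τ : (Fin (n + 1) → ℤ) → (AddMonoidAlgebra k ↥S ≃ₗ[k] AddMonoidAlgebra k ↥S),
      (∀ (u g : Fin (n + 1) → ℤ) (a : AddMonoidAlgebra k ↥S),
        IsHomogOfDeg S g a → IsHomogOfDeg S g (τ u a)) ∧
      (∀ (g' g'' : Fin (n + 1) → ℤ) (a a' : AddMonoidAlgebra k ↥S),
        IsHomogOfDeg S g' a' → τ g'' (τ g' a * a') = τ (g' + g'') a * τ g'' a') ∧
      (∀ s t : S,
        τ (t : Fin (n + 1) → ℤ) (AddMonoidAlgebra.single s (1 : k)) *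
            AddMonoidAlgebra.single t (1 : k) =
          ((betaq q (s : Fin (n + 1) → ℤ) (t : Fin (n + 1) → ℤ) : kˣ) : k) •
            AddMonoidAlgebra.single (s + t) (1 : k)) :=
  monoidAlgebra_twist_to_kqS_general S q
end

section
/- Let S ⊆ ℤ^{n+1} be a normal submonoid which generates ℤ^{n+1} as a group and is generated as a monoid by elements s₁,…,s_l (with l ≥ n+1). Let λ : ℤ^{n+1} → ℤ be a group homomorphism with λ(s_i) ≥ 0 for all 1 ≤ i ≤ l. Suppose s₁,…,sₙ ∈ ker λ are ℤ-linearly independent, and λ(s_l) ≠ 0. Then {x ∈ ℤ^{n+1} : λ(x) ≥ 0} = ℤs₁ + … + ℤsₙ + ℕs_{n+1} + … + ℕs_l. -/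
/-!
If `λ x ≥ 0`, then `λ(s_l) x - λ(x) s_l` lies in `ker λ`, a group of rank `n` containing the
independent `s₁, …, sₙ`, so a positive multiple of it is a `ℤ`-combination of them; hence a
positive multiple of `x` lies in the mixed span `ℤs₁ + … + ℤsₙ + ℕs_{n+1} + … + ℕs_l`.
The mixed span inherits normality from `S`: adding `|aᵢ| sᵢ` for `i ≤ n` to a representation
`p x = ∑ aᵢ sᵢ` makes all coefficients nonnegative. So `x` lies in the mixed span; the converse
is immediate from `λ(sᵢ) ≥ 0`.
-/

open Set Submodule

section MixedSpan

variable {G ι : Type*} [AddCommGroup G] [Fintype ι] {s : ι → G} {P : ι → Prop}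

/-- For `P i := n ≤ i` this is `ℤs₁ + … + ℤsₙ + ℕs_{n+1} + … + ℕs_l`. -/
def mixedSpan (s : ι → G) (P : ι → Prop) : AddSubmonoid G where
  carrier := {x | ∃ a : ι → ℤ, (∀ i, P i → 0 ≤ a i) ∧ x = ∑ i, a i • s i}
  zero_mem' := ⟨0, fun _ _ => le_rfl, by simp⟩
  add_mem' := by
    rintro _ _ ⟨a, ha, rfl⟩ ⟨b, hb, rfl⟩
    exact ⟨a + b, fun i hi => add_nonneg (ha i hi) (hb i hi),
      by simp [add_smul, Finset.sum_add_distrib]⟩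

theorem zsmul_mem_mixedSpan {i : ι} {c : ℤ} (hc : P i → 0 ≤ c) : c • s i ∈ mixedSpan s P := by
  classical
  refine ⟨Pi.single i c, fun j hj => ?_, by simp [Pi.single_apply]⟩
  by_cases hji : j = i
  · subst hji
    simpa using hc hj
  · simp [hji]

theorem closure_range_le_mixedSpan : AddSubmonoid.closure (range s) ≤ mixedSpan s P :=
  AddSubmonoid.closure_le.mpr <| range_subset_iff.mpr fun i =>
    one_zsmul (s i) ▸ zsmul_mem_mixedSpan fun _ => zero_le_one

theorem mem_mixedSpan_of_mem_span {κ : Type*} [Fintype κ] {e : κ → ι} (he : ∀ j, ¬P (e j))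
    {x : G} (hx : x ∈ span ℤ (range fun j => s (e j))) : x ∈ mixedSpan s P := by
  obtain ⟨c, rfl⟩ := (mem_span_range_iff_exists_fun ℤ).mp hx
  exact sum_mem fun j _ => zsmul_mem_mixedSpan fun h => absurd h (he j)

theorem sum_zsmul_mem_closure_range {c : ι → ℤ} (hc : ∀ i, 0 ≤ c i) :
    ∑ i, c i • s i ∈ AddSubmonoid.closure (range s) :=
  sum_mem fun i _ => by
    rw [← Int.toNat_of_nonneg (hc i), natCast_zsmul]
    exact AddSubmonoid.nsmul_mem _ (AddSubmonoid.subset_closure (mem_range_self i)) _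

theorem nsmulSaturated_mixedSpan (hs : (AddSubmonoid.closure (range s)).NSMulSaturated) :
    (mixedSpan s P).NSMulSaturated := by
  classical
  rintro p x ⟨a, ha, hpx⟩
  rcases Nat.eq_zero_or_pos p with hp | hp
  · exact Or.inl hp
  refine Or.inr ?_
  set b : ι → ℤ := fun i => if P i then 0 else |a i|
  have hneg : -∑ i, b i • s i ∈ mixedSpan s P :=
    ⟨-b, fun i hi => by simp [b, hi], by simp [neg_smul]⟩
  have hshift : p • (x + ∑ i, b i • s i) = ∑ i, (a i + p * b i) • s i := by
    simp only [smul_add, hpx, add_smul, Finset.sum_add_distrib, Finset.smul_sum, mul_smul,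
      natCast_zsmul]
  have hcoef : ∀ i, 0 ≤ a i + p * b i := by
    intro i
    by_cases hi : P i
    · simpa [b, hi] using ha i hi
    · have : (1 : ℤ) ≤ p := by exact_mod_cast hp
      simp only [b, hi, if_false]
      nlinarith [neg_abs_le (a i), abs_nonneg (a i)]
  have hsum : x + ∑ i, b i • s i ∈ AddSubmonoid.closure (range s) := by
    refine (hs ?_).resolve_left hp.ne'
    rw [hshift]
    exact sum_zsmul_mem_closure_range hcoef
  simpa using add_mem (closure_range_le_mixedSpan hsum) hneg

theorem map_nonneg_of_mem_mixedSpan (f : G →+ ℤ) (hpos : ∀ i, 0 ≤ f (s i))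
    (hker : ∀ i, ¬P i → f (s i) = 0) {x : G} (hx : x ∈ mixedSpan s P) : 0 ≤ f x := by
  obtain ⟨a, ha, rfl⟩ := hx
  rw [map_sum]
  refine Finset.sum_nonneg fun i _ => ?_
  rw [map_zsmul, smul_eq_mul]
  by_cases hi : P i
  · exact mul_nonneg (ha i hi) (hpos i)
  · rw [hker i hi, mul_zero]

end MixedSpan

/-- Otherwise `u, m, v₁, …, vₙ` would be `n + 2` linearly independent vectors. -/
theorem exists_smul_mem_span_of_map_eq_zero {R M : Type*} [CommRing R] [IsDomain R]
    [AddCommGroup M] [Module R M] [Module.Finite R M] {n : ℕ}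
    (hM : Module.finrank R M ≤ n + 1) (f : M →ₗ[R] R) {v : Fin n → M}
    (hv : LinearIndependent R v) (hvf : ∀ i, f (v i) = 0) {u : M} (hu : f u ≠ 0)
    {m : M} (hm : f m = 0) : ∃ q : R, q ≠ 0 ∧ q • m ∈ span R (range v) := by
  by_contra! hmv
  have hmv_indep : LinearIndependent R (Fin.cons m v) :=
    LinearIndependent.finCons' m v hv fun c y hy hcy => by
      by_contra hc
      exact hmv c hc (by rw [eq_neg_of_add_eq_zero_left hcy]; exact neg_mem hy)
  have hker : span R (range (Fin.cons m v : Fin (n + 1) → M)) ≤ LinearMap.ker f :=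
    span_le.mpr <| range_subset_iff.mpr fun i => Fin.cases hm hvf i
  have hu_indep : LinearIndependent R (Fin.cons u (Fin.cons m v)) :=
    LinearIndependent.finCons' u _ hmv_indep fun c y hy hcy => by
      have hfy : f y = 0 := hker hy
      have := congrArg f hcy
      simp only [map_add, map_smul, smul_eq_mul, hfy, add_zero, map_zero] at this
      exact (mul_eq_zero.mp this).resolve_right hu
  have := hu_indep.fintype_card_le_finrank
  simp only [Fintype.card_fin] at this
  omega

/-- Let `S ⊆ ℤ^{n+1}` be a normal submonoid which generates `ℤ^{n+1}` as a group and is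
generated as a monoid by `s₁, …, s_l` (`l ≥ n+1`). Let `λ : ℤ^{n+1} → ℤ` be a group
homomorphism with `λ(sᵢ) ≥ 0` for all `i`. If `s₁, …, sₙ ∈ ker λ` are `ℤ`-linearly
independent and `λ(s_l) ≠ 0`, then
`{x : λ(x) ≥ 0} = ℤs₁ + … + ℤsₙ + ℕs_{n+1} + … + ℕs_l`. -/
theorem halfspace_eq_mixed_span
    {n l : ℕ} (hl : n + 1 ≤ l) (s : Fin l → (Fin (n + 1) → ℤ))
    (hnormal : ∀ (g : Fin (n + 1) → ℤ) (p : ℕ), 1 ≤ p →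
        p • g ∈ AddSubmonoid.closure (Set.range s) → g ∈ AddSubmonoid.closure (Set.range s))
    (lam : (Fin (n + 1) → ℤ) →+ ℤ)
    (hpos : ∀ i : Fin l, 0 ≤ lam (s i))
    (hker : ∀ i : Fin l, (i : ℕ) < n → lam (s i) = 0)
    (hindep : LinearIndependent ℤ (fun i : Fin n => s (Fin.castLE (by omega) i)))
    (hlast : lam (s ⟨l - 1, by omega⟩) ≠ 0) :
    ∀ x : Fin (n + 1) → ℤ, 0 ≤ lam x ↔
      ∃ a : Fin l → ℤ, (∀ i : Fin l, n ≤ (i : ℕ) → 0 ≤ a i) ∧ x = ∑ i : Fin l, a i • s i := by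
  intro x
  refine ⟨fun hx => ?_, map_nonneg_of_mem_mixedSpan lam hpos fun i hi => hker i (not_le.mp hi)⟩
  set t := s ⟨l - 1, by omega⟩
  have ht : 0 < lam t := (hpos _).lt_of_ne' hlast
  have hm : lam (lam t • x - lam x • t) = 0 := by
    rw [map_sub, map_zsmul, map_zsmul, smul_eq_mul, smul_eq_mul, mul_comm, sub_self]
  obtain ⟨q, hq, hqm⟩ := exists_smul_mem_span_of_map_eq_zero (Module.finrank_fin_fun ℤ).le
    lam.toIntLinearMap hindep (fun i => hker _ i.isLt) hlast hm
  replace hqm := smul_mem _ q.sign hqm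
  rw [smul_smul, Int.sign_mul_self_eq_abs] at hqm
  obtain ⟨p, hp⟩ : ∃ p : ℕ, (p : ℤ) = |q| * lam t := ⟨_, Int.toNat_of_nonneg (by positivity)⟩
  have hp0 : p ≠ 0 := by
    rintro rfl
    have := mul_pos (abs_pos.mpr hq) ht
    omega
  have hpx : p • x ∈ mixedSpan s fun i : Fin l => n ≤ (i : ℕ) := by
    rw [← natCast_zsmul, hp, show (|q| * lam t) • x =
      |q| • (lam t • x - lam x • t) + (|q| * lam x) • t by module]
    exact add_mem (mem_mixedSpan_of_mem_span (e := Fin.castLE (by omega))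
      (fun i => Nat.not_le.mpr i.isLt) hqm) (zsmul_mem_mixedSpan fun _ => by positivity)
  have hsat : (AddSubmonoid.closure (range s)).NSMulSaturated := fun p g hg =>
    (Nat.eq_zero_or_pos p).imp_right fun hp => hnormal g p hp hg
  exact (nsmulSaturated_mixedSpan hsat hpx).resolve_left hp0
end

section
/- Let S be a normal submonoid of an abelian group G, and let s ∈ S. Then the submonoid S + ℤs = {x + m·s : x ∈ S, m ∈ ℤ} of G is normal. -/
/-! Divide `m` by `p` with remainder, `m = p q + r` with `0 ≤ r`. From `p • g = x + m • s`
we get `p • (g - q • s) = x + r • s ∈ S`, so normality of `S` gives `g - q • s ∈ S`. -/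

section

variable {G : Type*} [AddCommGroup G]

theorem AddSubmonoid.zsmul_mem_of_nonneg (S : AddSubmonoid G) {s : G} (hs : s ∈ S) {r : ℤ}
    (hr : 0 ≤ r) : r • s ∈ S := by
  lift r to ℕ using hr
  rw [natCast_zsmul]
  exact S.nsmul_mem hs r

theorem emod_zsmul_eq_sub (s : G) (m : ℤ) (p : ℕ) :
    (m % p) • s = m • s - p • ((m / p) • s) := by
  rw [Int.emod_def, sub_smul, mul_smul, natCast_zsmul]

end

/-- If `S` is a normal submonoid of an abelian group `G` and `s ∈ S`, then the submonoid
`S + ℤs = {x + m·s : x ∈ S, m ∈ ℤ}` of `G` is normal. -/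
theorem normal_submonoid_add_zmultiples
    {G : Type*} [AddCommGroup G] (S : AddSubmonoid G)
    (hnormal : ∀ (g : G) (p : ℕ), 1 ≤ p → p • g ∈ S → g ∈ S)
    (s : G) (hs : s ∈ S) :
    ∀ (g : G) (p : ℕ), 1 ≤ p →
      (∃ x ∈ S, ∃ m : ℤ, p • g = x + m • s) → ∃ x ∈ S, ∃ m : ℤ, g = x + m • s := by
  rintro g p hp ⟨x, hx, m, hm⟩
  have hrem : p • (g - (m / p) • s) = x + (m % p) • s := by
    rw [smul_sub, hm, emod_zsmul_eq_sub]
    abel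
  have hrem_nonneg : 0 ≤ m % p := Int.emod_nonneg m (by omega)
  have hmem : g - (m / p) • s ∈ S :=
    hnormal _ p hp (hrem ▸ S.add_mem hx (S.zsmul_mem_of_nonneg hs hrem_nonneg))
  exact ⟨g - (m / p) • s, hmem, m / p, (sub_add_cancel g _).symm⟩
end

section
/- Every element of str(Π) different from the identity may be written as the class of a product π₁·π₂·…·π_s with s ∈ ℕ, s ≥ 1, and π₁ ≤ π₂ ≤ … ≤ π_s in Π. -/
/-- The defining relations of the straightening semigroup: `α·β ∼ (α⊓β)·(α⊔β)`. -/
def strRel (L : Type*) [DistribLattice L] (x y : Multiset L) : Prop :=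
  ∃ a b : L, x = {a, b} ∧ y = {a ⊓ b, a ⊔ b}

/-- The monoid congruence on the free commutative monoid `Multiset L` generated by the
straightening relations; the straightening semigroup `str(L)` is its quotient. -/
def strCon (L : Type*) [DistribLattice L] : AddCon (Multiset L) :=
  addConGen (strRel L)

/-!
Sorting by insertion: to insert `a` into a sorted word `b :: w`, straighten `a·b` into
`(a ⊓ b)·(a ⊔ b)` and insert `a ⊔ b` into `w`. The result starts with `a ⊓ b`, and it is sorted
because straightening never changes the set of common lower bounds of a word.
-/

namespace strCon

variable {L : Type*} [DistribLattice L]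

theorem cons {s t : Multiset L} (h : strCon L s t) (a : L) : strCon L (a ::ₘ s) (a ::ₘ t) := by
  simpa only [Multiset.singleton_add] using (strCon L).add ((strCon L).refl {a}) h

theorem cons_cons_inf_sup (a b : L) (t : Multiset L) :
    strCon L (a ::ₘ b ::ₘ t) (a ⊓ b ::ₘ a ⊔ b ::ₘ t) := by
  have hab : strCon L {a, b} {a ⊓ b, a ⊔ b} := AddConGen.Rel.of _ _ ⟨a, b, rfl, rfl⟩
  simpa only [Multiset.insert_eq_cons, Multiset.cons_add, Multiset.singleton_add]
    using (strCon L).add hab ((strCon L).refl t)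

theorem forall_le_iff {s t : Multiset L} (h : strCon L s t) (c : L) :
    (∀ x ∈ s, c ≤ x) ↔ (∀ x ∈ t, c ≤ x) := by
  induction h with
  | of s t hst =>
    obtain ⟨a, b, rfl, rfl⟩ := hst
    simp only [Multiset.insert_eq_cons, Multiset.mem_cons, Multiset.mem_singleton,
      forall_eq_or_imp, forall_eq, le_inf_iff]
    exact ⟨fun ⟨ha, hb⟩ => ⟨⟨ha, hb⟩, ha.trans le_sup_left⟩, fun h => h.1⟩
  | refl => rfl
  | symm _ ih => exact ih.symm
  | trans _ _ ih₁ ih₂ => exact ih₁.trans ih₂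
  | add _ _ ih₁ ih₂ => simp only [Multiset.mem_add, or_imp, forall_and, ih₁, ih₂]

theorem exists_sorted_of_cons_sorted (a : L) {l : List L} (hl : l.Pairwise (· ≤ ·)) :
    ∃ l' : List L, l'.Pairwise (· ≤ ·) ∧ strCon L (a ::ₘ (l : Multiset L)) l' := by
  induction l generalizing a with
  | nil => exact ⟨[a], List.pairwise_singleton _ a, (strCon L).refl _⟩
  | cons b w ih =>
    obtain ⟨hb, hw⟩ := List.pairwise_cons.1 hl
    obtain ⟨l', hl', hwl'⟩ := ih (a ⊔ b) hw
    have hlow : ∀ x ∈ l', a ⊓ b ≤ x := by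
      refine (forall_le_iff hwl' _).1 ?_
      simp only [Multiset.mem_cons, Multiset.mem_coe, forall_eq_or_imp]
      exact ⟨inf_le_left.trans le_sup_left, fun y hy => inf_le_right.trans (hb y hy)⟩
    refine ⟨a ⊓ b :: l', List.pairwise_cons.2 ⟨hlow, hl'⟩, ?_⟩
    simpa only [Multiset.cons_coe] using (strCon L).trans (cons_cons_inf_sup a b w) (cons hwl' (a ⊓ b))

theorem exists_sorted (m : Multiset L) :
    ∃ l : List L, l.Pairwise (· ≤ ·) ∧ strCon L m l := by
  induction m using Multiset.induction with
  | empty => exact ⟨[], List.Pairwise.nil, (strCon L).refl _⟩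
  | cons a m ih =>
    obtain ⟨l, hl, hml⟩ := ih
    obtain ⟨l', hl', hll'⟩ := exists_sorted_of_cons_sorted a hl
    exact ⟨l', hl', (strCon L).trans (cons hml a) hll'⟩

end strCon

theorem str_exists_sorted_word_general (L : Type*) [DistribLattice L] :
    ∀ x : (strCon L).Quotient, x ≠ 0 →
      ∃ l : List L, l ≠ [] ∧ l.Pairwise (· ≤ ·) ∧ x = (strCon L).mk' (↑l : Multiset L) := by
  intro x hx
  obtain ⟨m, rfl⟩ := AddCon.mk'_surjective x
  obtain ⟨l, hl, hml⟩ := strCon.exists_sorted m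
  refine ⟨l, ?_, hl, (AddCon.eq _).2 hml⟩
  rintro rfl
  exact hx ((AddCon.eq _).2 hml)

/-- Every element of `str(Π)` different from the identity is the class of a product
`π₁·…·π_s` with `s ≥ 1` and `π₁ ≤ … ≤ π_s` in `Π`. -/
theorem str_exists_sorted_word (L : Type*) [DistribLattice L] [Fintype L] :
    ∀ x : (strCon L).Quotient, x ≠ 0 →
      ∃ l : List L, l ≠ [] ∧ l.Pairwise (· ≤ ·) ∧ x = (strCon L).mk' (↑l : Multiset L) :=
  str_exists_sorted_word_general L
end

section
/- For every element a of str(Π) different from the identity, there exist a unique integer t ≥ 1 and a unique nondecreasing sequence π₁ ≤ π₂ ≤ … ≤ π_t of elements of Π such that a is the class of the product π₁·π₂·…·π_t. -/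
/-!
Existence is straightening: inserting `a` into a sorted word `b :: t` yields
`(a ⊓ b) :: (a ⊔ b inserted into t)`, one defining relation per step.

Uniqueness comes from invariants. A lattice homomorphism `f : Π → Bool` satisfies
`f (α ⊓ β) + f (α ⊔ β) = f α + f β`, so the number of letters of a word on which `f` is `true`
depends only on its class in `str(Π)`, and so does the length. In a sorted word these letters form
a final segment, and by the prime ideal theorem such homomorphisms separate `x ≰ y`; comparing
first letters and inducting shows that the invariants determine a sorted word.
-/

section

variable {L : Type*} [DistribLattice L]

theorem strCon_cons (a : L) {s t : Multiset L} (h : strCon L s t) :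
    strCon L (a ::ₘ s) (a ::ₘ t) := by
  simpa using (strCon L).add ((strCon L).refl {a}) h

theorem strCon_cons_cons (a b : L) (s : Multiset L) :
    strCon L (a ::ₘ b ::ₘ s) (a ⊓ b ::ₘ a ⊔ b ::ₘ s) := by
  simpa using (strCon L).add (AddConGen.Rel.of _ _ ⟨a, b, rfl, rfl⟩) ((strCon L).refl s)

open scoped Classical in
theorem exists_latticeHom_bool_of_not_le {x y : L} (h : ¬ x ≤ y) :
    ∃ f : LatticeHom L Bool, f x = true ∧ f y = false := by
  have hdisj : Disjoint (Order.PFilter.principal x : Set L) (Order.Ideal.principal y : Set L) :=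
    Set.disjoint_left.2 fun z hxz hzy => h (le_trans hxz hzy)
  obtain ⟨J, hJ, hyJ, hxJ⟩ := DistribLattice.prime_ideal_of_disjoint_filter_ideal hdisj
  refine ⟨{ toFun := fun z => decide (z ∉ J)
            map_sup' := fun a b => by simp [Order.Ideal.sup_mem_iff]
            map_inf' := fun a b => by
              have : a ⊓ b ∈ J ↔ a ∈ J ∨ b ∈ J :=
                ⟨hJ.mem_or_mem, fun h => h.elim (J.lower inf_le_left) (J.lower inf_le_right)⟩
              simp [this] }, ?_, ?_⟩
  · simpa using Set.disjoint_left.1 hxJ (Order.PFilter.mem_principal.2 le_rfl)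
  · simpa using hyJ (Order.Ideal.mem_principal.2 le_rfl)

theorem strCon_le_ker {M : Type*} [AddCommMonoid M] (φ : Multiset L →+ M)
    (h : ∀ a b : L, φ {a, b} = φ {a ⊓ b, a ⊔ b}) : strCon L ≤ AddCon.ker φ :=
  AddCon.addConGen_le.2 fun _ _ ⟨a, b, hx, hy⟩ => by rw [AddCon.ker_rel, hx, hy, h]

theorem card_eq_of_strCon {s t : Multiset L} (h : strCon L s t) :
    Multiset.card s = Multiset.card t :=
  (AddCon.ker_rel _).1 (strCon_le_ker Multiset.cardHom (fun _ _ => rfl) h)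

theorem countP_eq_of_strCon (f : LatticeHom L Bool) {s t : Multiset L} (h : strCon L s t) :
    s.countP (f · = true) = t.countP (f · = true) :=
  (AddCon.ker_rel _).1 <| strCon_le_ker (Multiset.countPAddMonoidHom _) (fun a b => by
    simp only [Multiset.coe_countPAddMonoidHom, Multiset.insert_eq_cons, ← Multiset.cons_zero,
      Multiset.countP_cons, Multiset.countP_zero, map_inf, map_sup]
    cases f a <;> cases f b <;> rfl) h

namespace List

def straightenCons (a : L) : List L → List L
  | [] => [a]
  | b :: t => (a ⊓ b) :: straightenCons (a ⊔ b) t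

def straighten (l : List L) : List L := l.foldr straightenCons []

theorem length_straightenCons (a : L) (l : List L) :
    (straightenCons a l).length = l.length + 1 := by
  induction l generalizing a <;> simp [straightenCons, *]

theorem le_of_mem_straightenCons {c a : L} {l : List L} (hca : c ≤ a) (hcl : ∀ x ∈ l, c ≤ x) :
    ∀ x ∈ straightenCons a l, c ≤ x := by
  induction l generalizing a with
  | nil => simpa [straightenCons] using hca
  | cons b t ih =>
    simp only [straightenCons, forall_mem_cons] at hcl ⊢
    exact ⟨le_inf hca hcl.1, ih (le_sup_of_le_left hca) hcl.2⟩

theorem pairwise_straightenCons (a : L) {l : List L} (hl : l.Pairwise (· ≤ ·)) :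
    (straightenCons a l).Pairwise (· ≤ ·) := by
  induction l generalizing a with
  | nil => exact pairwise_singleton _ a
  | cons b t ih =>
    obtain ⟨hbt, ht⟩ := pairwise_cons.1 hl
    exact pairwise_cons.2 ⟨le_of_mem_straightenCons (inf_le_left.trans le_sup_left)
      (fun x hx => inf_le_right.trans (hbt x hx)), ih _ ht⟩

theorem strCon_cons_straightenCons (a : L) (l : List L) :
    strCon L (a ::ₘ l) (straightenCons a l) := by
  induction l generalizing a with
  | nil => exact (strCon L).refl _
  | cons b t ih =>
    exact (strCon L).trans (strCon_cons_cons a b t) (strCon_cons _ (ih _))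

theorem length_straighten (l : List L) : l.straighten.length = l.length := by
  induction l with
  | nil => rfl
  | cons a t ih => exact (length_straightenCons a _).trans (congrArg (· + 1) ih)

theorem pairwise_straighten (l : List L) : l.straighten.Pairwise (· ≤ ·) := by
  induction l with
  | nil => exact Pairwise.nil
  | cons a t ih => exact pairwise_straightenCons a ih

theorem strCon_straighten (l : List L) : strCon L l l.straighten := by
  induction l with
  | nil => exact (strCon L).refl _
  | cons a t ih => exact (strCon L).trans (strCon_cons a ih) (strCon_cons_straightenCons a _)

theorem head_le_head_of_countP_eq {a a' : L} {t t' : List L} (hs : (a :: t).Pairwise (· ≤ ·))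
    (hlen : t.length = t'.length)
    (hcount : ∀ f : LatticeHom L Bool, (a :: t).countP f = (a' :: t').countP f) : a ≤ a' := by
  by_contra h
  obtain ⟨f, hfa, hfa'⟩ := exists_latticeHom_bool_of_not_le h
  have hall : (a :: t).countP f = t.length + 1 := by
    rw [countP_eq_length.2]
    · rfl
    · intro x hx
      rcases mem_cons.1 hx with rfl | hx
      · exact hfa
      · exact OrderHomClass.mono f (rel_of_pairwise_cons hs hx) hfa
  have hsome : (a' :: t').countP f ≤ t'.length := by
    simpa [countP_cons, hfa'] using countP_le_length
  have := hcount f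
  omega

theorem eq_of_pairwise_le_of_countP_eq {l l' : List L} (hl : l.Pairwise (· ≤ ·))
    (hl' : l'.Pairwise (· ≤ ·)) (hlen : l.length = l'.length)
    (hcount : ∀ f : LatticeHom L Bool, l.countP f = l'.countP f) : l = l' := by
  induction l generalizing l' with
  | nil => exact (length_eq_zero_iff.1 hlen.symm).symm
  | cons a t ih =>
    obtain _ | ⟨a', t'⟩ := l'
    · simp at hlen
    have hlen' : t.length = t'.length := by simpa using hlen
    obtain rfl : a = a' := le_antisymm (head_le_head_of_countP_eq hl hlen' hcount)
      (head_le_head_of_countP_eq hl' hlen'.symm fun f => (hcount f).symm)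
    rw [ih (pairwise_cons.1 hl).2 (pairwise_cons.1 hl').2 hlen' fun f => by
      simpa [countP_cons] using hcount f]

theorem eq_of_pairwise_le_of_strCon {l l' : List L} (hl : l.Pairwise (· ≤ ·))
    (hl' : l'.Pairwise (· ≤ ·)) (h : strCon L l l') : l = l' :=
  eq_of_pairwise_le_of_countP_eq hl hl' (by simpa using card_eq_of_strCon h)
    fun f => by simpa using countP_eq_of_strCon f h

end List

end

theorem str_existsUnique_sorted_word_general (L : Type*) [DistribLattice L] :
    ∀ x : (strCon L).Quotient, x ≠ 0 →
      ∃! l : List L, l ≠ [] ∧ l.Pairwise (· ≤ ·) ∧ x = (strCon L).mk' (↑l : Multiset L) := by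
  intro x hx
  obtain ⟨s, rfl⟩ := (strCon L).mk'_surjective x
  obtain ⟨l, rfl⟩ : ∃ l : List L, (l : Multiset L) = s := Quot.exists_rep s
  have hmk : (strCon L).mk' l = (strCon L).mk' l.straighten := (AddCon.eq _).2 l.strCon_straighten
  refine ⟨l.straighten, ⟨?_, l.pairwise_straighten, hmk⟩, ?_⟩
  · rw [← List.length_pos_iff, List.length_straighten, List.length_pos_iff]
    rintro rfl
    exact hx (map_zero _)
  · rintro l' ⟨-, hl', hx'⟩
    exact List.eq_of_pairwise_le_of_strCon hl' l.pairwise_straighten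
      ((AddCon.eq _).1 (hx'.symm.trans hmk))

/-- Every element of `str(Π)` different from the identity is the class of a unique product
`π₁·…·π_t` with `t ≥ 1` and `π₁ ≤ … ≤ π_t` a nondecreasing sequence in `Π`. -/
theorem str_existsUnique_sorted_word (L : Type*) [DistribLattice L] [Fintype L] :
    ∀ x : (strCon L).Quotient, x ≠ 0 →
      ∃! l : List L, l ≠ [] ∧ l.Pairwise (· ≤ ·) ∧ x = (strCon L).mk' (↑l : Multiset L) :=
  str_existsUnique_sorted_word_general L
end
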